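/- arXiv:1209.4737 — 2 statements merged into one kernel-verified Lean document; each statement's English description precedes it below -/
import Mathlib

section
/- Let X be a smooth manifold, let ω be a symplectic form on X, and let β be a differential n-form on X (where dim X = 2n) with ω ∧ β = 0. Let Λ ⊂ X be a Lagrangian submanifold, let H, K : X → ℝ be smooth functions with Hamiltonian vector fields ξ, ζ respectively. Then the restriction to Λ of {H,K}·β equals the restriction to Λ of −(dH ∧ i_ζ β − dK ∧ i_ξ β), where {H,K} denotes the Poisson bracket and i denotes interior product. -/
open scoped BigOperators
noncomputable section

variable {E : Type*} [NormedAddCommGroup E] [NormedSpace ℝ E]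

/-- A family of `k`-multilinear functions is pointwise an alternating form. -/
def IsAltForm (k : ℕ) (α : E → (Fin k → E) → ℝ) : Prop :=
  ∀ x, ∃ A : E [⋀^Fin k]→ₗ[ℝ] ℝ, ∀ v, α x v = A v

/-- Smoothness of a differential form (coefficient-wise). -/
def SmoothForm (k : ℕ) (α : E → (Fin k → E) → ℝ) : Prop :=
  ∀ v, ContDiff ℝ (⊤ : ℕ∞) (fun x => α x v)

/-- Exterior derivative of a `k`-form (evaluated on constant vector fields). -/
def extDerivF (k : ℕ) (α : E → (Fin k → E) → ℝ) : E → (Fin (k+1) → E) → ℝ :=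
  fun x v => ∑ i : Fin (k+1), (-1 : ℝ)^(i : ℕ) *
    fderiv ℝ (fun y => α y (i.removeNth v)) x (v i)

/-- Wedge product of differential forms. -/
def wedgeF {a b : ℕ} (α : E → (Fin a → E) → ℝ) (β : E → (Fin b → E) → ℝ) :
    E → (Fin (a+b) → E) → ℝ :=
  fun x v => ((a.factorial * b.factorial : ℕ) : ℝ)⁻¹ *
    ∑ σ : Equiv.Perm (Fin (a+b)), ((Equiv.Perm.sign σ : ℤ) : ℝ) *
      (α x fun i => v (σ (Fin.castAdd b i))) * (β x fun j => v (σ (Fin.natAdd a j)))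

/-- Interior product of a form with a vector field. -/
def iprod {k : ℕ} (ξ : E → E) (α : E → (Fin (k+1) → E) → ℝ) : E → (Fin k → E) → ℝ :=
  fun x v => α x (Fin.cons (ξ x) v)

/-- Reindexing a form along an equality of degrees. -/
def castF {a b : ℕ} (h : a = b) (α : E → (Fin a → E) → ℝ) : E → (Fin b → E) → ℝ :=
  fun x v => α x (fun i => v (Fin.cast h i))

set_option maxHeartbeats 1000000
set_option linter.unusedSectionVars false
lemma units_smul_real (u : ℤˣ) (x : ℝ) : u • x = ((u : ℤ) : ℝ) * x := by
  rcases Int.units_eq_one_or u with h | h <;> simp [h]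

lemma units_sq_real (u : ℤˣ) : ((u : ℤ) : ℝ) * ((u : ℤ) : ℝ) = 1 := by
  rcases Int.units_eq_one_or u with h | h <;> simp [h]

lemma sum_perm_succ {M : Type*} [AddCommMonoid M] {n : ℕ} (f : Equiv.Perm (Fin (n+1)) → M) :
    ∑ σ : Equiv.Perm (Fin (n+1)), f σ
      = ∑ p : Fin (n+1), ∑ e : Equiv.Perm (Fin n), f (Equiv.Perm.decomposeFin.symm (p, e)) := by
  rw [← Equiv.sum_comp (Equiv.Perm.decomposeFin.symm) f, Fintype.sum_prod_type]

lemma vec2_eta (c : Fin 2 → E) : ![c 0, c 1] = c := by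
  funext i
  fin_cases i <;> rfl

lemma alt2_swap (A : E [⋀^Fin 2]→ₗ[ℝ] ℝ) (a b : E) : A ![b, a] = - A ![a, b] := by
  have h : ![b, a] = ![a, b] ∘ (Equiv.swap (0 : Fin 2) 1) := by
    funext i
    fin_cases i <;> simp [Equiv.swap_apply_left, Equiv.swap_apply_right]
  rw [h, AlternatingMap.map_swap]
  exact Fin.zero_ne_one

lemma alt_cons_comp {n : ℕ} (B : E [⋀^Fin (n+1)]→ₗ[ℝ] ℝ) (c : E) (z : Fin n → E)
    (e : Equiv.Perm (Fin n)) :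
    B (Fin.cons c (z ∘ e)) = ((Equiv.Perm.sign e : ℤ) : ℝ) * B (Fin.cons c z) := by
  have h : (Fin.cons c (z ∘ e) : Fin (n+1) → E)
      = (Fin.cons c z : Fin (n+1) → E) ∘ (Equiv.Perm.decomposeFin.symm (0, e)) := by
    funext j
    refine Fin.cases ?_ (fun i => ?_) j
    · simp [Equiv.Perm.decomposeFin_symm_apply_zero]
    · simp [Equiv.Perm.decomposeFin_symm_apply_succ]
  rw [h, AlternatingMap.map_perm, Equiv.Perm.decomposeFin.symm_sign, units_smul_real]
  simp

lemma cons_swap_eq_update {n : ℕ} (c : E) (v : Fin (n+1) → E) (p : Fin (n+1)) :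
    (Fin.cons c (fun j : Fin n => v (Equiv.swap 0 p j.succ)) : Fin (n+1) → E)
      = (Function.update v p c) ∘ (Equiv.swap 0 p) := by
  funext j
  refine Fin.cases ?_ (fun i => ?_) j
  · rw [Function.comp_apply, Equiv.swap_apply_left, Fin.cons_zero, Function.update_self]
  · simp only [Fin.cons_succ, Function.comp_apply]
    rcases eq_or_ne (i.succ) p with h | h
    · rw [h, Equiv.swap_apply_right, Function.update_of_ne (Ne.symm ?_)]
      rw [← h]; exact Fin.succ_ne_zero i
    · rw [Equiv.swap_apply_of_ne_of_ne (Fin.succ_ne_zero i) h, Function.update_of_ne h]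

lemma alt_update {n : ℕ} (B : E [⋀^Fin (n+1)]→ₗ[ℝ] ℝ) (c : E) (v : Fin (n+1) → E)
    (p : Fin (n+1)) :
    B (Fin.cons c (fun j : Fin n => v (Equiv.swap 0 p j.succ)))
      = (if p = 0 then (1:ℝ) else -1) * B (Function.update v p c) := by
  rw [cons_swap_eq_update, AlternatingMap.map_perm, units_smul_real]
  rcases eq_or_ne p 0 with h | h
  · simp [h]
  · rw [Equiv.Perm.sign_swap (Ne.symm h)]
    simp [h]

lemma wedge_one_eval {m : ℕ} (B : E [⋀^Fin (m+1)]→ₗ[ℝ] ℝ) (g : E → ℝ) (c : E)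
    (v : Fin (m+1) → E) :
    ((Nat.factorial 1 * Nat.factorial m : ℕ) : ℝ)⁻¹ *
      ∑ σ : Equiv.Perm (Fin (1+m)), ((Equiv.Perm.sign σ : ℤ) : ℝ) *
        g (v (Fin.cast (Nat.add_comm 1 m) (σ (Fin.castAdd m 0)))) *
        B (Fin.cons c (fun j => v (Fin.cast (Nat.add_comm 1 m) (σ (Fin.natAdd 1 j)))))
    = ∑ p : Fin (m+1), g (v p) * B (Function.update v p c) := by
  have h1 : (1 : ℕ) + m = m + 1 := Nat.add_comm 1 m
  set φ : Fin (1+m) ≃ Fin (m+1) := finCongr h1 with hφ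
  have step1 : ∑ σ : Equiv.Perm (Fin (1+m)), ((Equiv.Perm.sign σ : ℤ) : ℝ) *
        g (v (Fin.cast (Nat.add_comm 1 m) (σ (Fin.castAdd m 0)))) *
        B (Fin.cons c (fun j => v (Fin.cast (Nat.add_comm 1 m) (σ (Fin.natAdd 1 j)))))
      = ∑ τ : Equiv.Perm (Fin (m+1)), ((Equiv.Perm.sign τ : ℤ) : ℝ) *
        g (v (τ 0)) * B (Fin.cons c (fun j => v (τ j.succ))) := by
    refine Fintype.sum_equiv φ.permCongr _ _ (fun σ => ?_)
    have hs : Equiv.Perm.sign (φ.permCongr σ) = Equiv.Perm.sign σ :=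
      Equiv.Perm.sign_permCongr φ σ
    have e0 : φ.symm (0 : Fin (m+1)) = Fin.castAdd m 0 := by
      apply Fin.ext; simp [hφ]
    have e1 : ∀ j : Fin m, φ.symm (j.succ) = Fin.natAdd 1 j := by
      intro j; apply Fin.ext; simp [hφ, Nat.add_comm]
    have hc : ∀ i : Fin (1+m), v (Fin.cast (Nat.add_comm 1 m) i) = v (φ i) := fun _ => rfl
    have ha : v (Fin.cast (Nat.add_comm 1 m) (σ (Fin.castAdd m 0)))
        = v ((φ.permCongr σ) 0) := by
      show v (φ (σ (Fin.castAdd m 0))) = _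
      rw [Equiv.permCongr_apply, e0]
    have hb : (fun j => v (Fin.cast (Nat.add_comm 1 m) (σ (Fin.natAdd 1 j))))
        = (fun j : Fin m => v ((φ.permCongr σ) j.succ)) := by
      funext j
      show v (φ (σ (Fin.natAdd 1 j))) = _
      rw [Equiv.permCongr_apply, e1]
    rw [hs, ha, hb]
  rw [step1, sum_perm_succ]
  have step2 : ∀ p : Fin (m+1), ∀ e : Equiv.Perm (Fin m),
      ((Equiv.Perm.sign (Equiv.Perm.decomposeFin.symm (p, e)) : ℤ) : ℝ) *
        g (v (Equiv.Perm.decomposeFin.symm (p, e) 0)) *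
        B (Fin.cons c (fun j => v (Equiv.Perm.decomposeFin.symm (p, e) j.succ)))
      = g (v p) * B (Function.update v p c) := by
    intro p e
    have hsgn : ((Equiv.Perm.sign (Equiv.Perm.decomposeFin.symm (p, e)) : ℤ) : ℝ)
        = (if p = 0 then (1:ℝ) else -1) * ((Equiv.Perm.sign e : ℤ) : ℝ) := by
      rw [Equiv.Perm.decomposeFin.symm_sign]
      rcases eq_or_ne p 0 with h | h <;> simp [h]
    have harg : (fun j => v (Equiv.Perm.decomposeFin.symm (p, e) j.succ))
        = (fun j : Fin m => v (Equiv.swap 0 p j.succ)) ∘ e := by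
      funext j
      simp [Equiv.Perm.decomposeFin_symm_apply_succ]
    rw [Equiv.Perm.decomposeFin_symm_apply_zero, hsgn, harg, alt_cons_comp, alt_update]
    have h3 : ((Equiv.Perm.sign e : ℤ) : ℝ)^2 = 1 := by
      rw [sq]; exact units_sq_real _
    rcases eq_or_ne p 0 with h | h <;> simp [h] <;> ring_nf <;> rw [h3] <;> ring
  have step3 : ∑ p : Fin (m+1), ∑ e : Equiv.Perm (Fin m),
      ((Equiv.Perm.sign (Equiv.Perm.decomposeFin.symm (p, e)) : ℤ) : ℝ) *
        g (v (Equiv.Perm.decomposeFin.symm (p, e) 0)) *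
        B (Fin.cons c (fun j => v (Equiv.Perm.decomposeFin.symm (p, e) j.succ)))
      = ∑ p : Fin (m+1), (Nat.factorial m : ℝ) * (g (v p) * B (Function.update v p c)) := by
    refine Finset.sum_congr rfl (fun p _ => ?_)
    rw [Finset.sum_congr rfl (fun e _ => step2 p e), Finset.sum_const,
      Finset.card_univ, Fintype.card_perm, Fintype.card_fin, nsmul_eq_mul]
  rw [step3, ← Finset.mul_sum]
  rw [← mul_assoc]
  have : ((Nat.factorial 1 * Nat.factorial m : ℕ) : ℝ)⁻¹ * (Nat.factorial m : ℝ) = 1 := by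
    rw [Nat.cast_mul]
    field_simp [Nat.factorial_ne_zero]
    simp [Nat.factorial_one]
  rw [this, one_mul]

lemma sign_decomp_real {n : ℕ} (p : Fin (n+1)) (e : Equiv.Perm (Fin n)) :
    ((Equiv.Perm.sign (Equiv.Perm.decomposeFin.symm (p, e)) : ℤ) : ℝ)
      = (if p = 0 then (1:ℝ) else -1) * ((Equiv.Perm.sign e : ℤ) : ℝ) := by
  rw [Equiv.Perm.decomposeFin.symm_sign]
  rcases eq_or_ne p 0 with h | h <;> simp [h]

lemma wedge_two_sum {m : ℕ} (h2 : 2 + (m+1) = m + 3)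
    (A : E [⋀^Fin 2]→ₗ[ℝ] ℝ) (B : E [⋀^Fin (m+1)]→ₗ[ℝ] ℝ)
    (a b : E) (v : Fin (m+1) → E) (h0 : ∀ i j, A ![v i, v j] = 0)
    (U : Fin (m+3) → E) (hU : U = Fin.cons a (Fin.cons b v)) :
    ∑ σ : Equiv.Perm (Fin (2+(m+1))), ((Equiv.Perm.sign σ : ℤ) : ℝ) *
        A ![U (Fin.cast h2 (σ (Fin.castAdd (m+1) 0))),
            U (Fin.cast h2 (σ (Fin.castAdd (m+1) 1)))] *
        B (fun j => U (Fin.cast h2 (σ (Fin.natAdd 2 j))))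
    = ((m+1).factorial : ℝ) * (2 * (A ![a, b] * B v)
        - 2 * ∑ k, A ![a, v k] * B (Function.update v k b)
        + 2 * ∑ k, A ![b, v k] * B (Function.update v k a)) := by
  -- evaluation facts for U
  have hU0 : U 0 = a := by rw [hU]; rfl
  have hU1 : U 1 = b := by
    rw [hU, ← Fin.succ_zero_eq_one, Fin.cons_succ, Fin.cons_zero]
  have hU2 : ∀ j : Fin (m+1), U j.succ.succ = v j := by
    intro j; rw [hU, Fin.cons_succ, Fin.cons_succ]
  -- step 1 : transport the sum to permutations of `Fin (m+3)`
  set φ : Fin (2+(m+1)) ≃ Fin (m+3) := finCongr h2 with hφ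
  have step1 : ∑ σ : Equiv.Perm (Fin (2+(m+1))), ((Equiv.Perm.sign σ : ℤ) : ℝ) *
        A ![U (Fin.cast h2 (σ (Fin.castAdd (m+1) 0))),
            U (Fin.cast h2 (σ (Fin.castAdd (m+1) 1)))] *
        B (fun j => U (Fin.cast h2 (σ (Fin.natAdd 2 j))))
      = ∑ τ : Equiv.Perm (Fin (m+3)), ((Equiv.Perm.sign τ : ℤ) : ℝ) *
        A ![U (τ 0), U (τ 1)] * B (fun j => U (τ j.succ.succ)) := by
    refine Fintype.sum_equiv φ.permCongr _ _ (fun σ => ?_)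
    have hs : Equiv.Perm.sign (φ.permCongr σ) = Equiv.Perm.sign σ :=
      Equiv.Perm.sign_permCongr φ σ
    have e0 : φ.symm (0 : Fin (m+3)) = Fin.castAdd (m+1) 0 := by
      apply Fin.ext; simp [hφ]
    have e1 : φ.symm (1 : Fin (m+3)) = Fin.castAdd (m+1) 1 := by
      apply Fin.ext; simp [hφ]
    have e2 : ∀ j : Fin (m+1), φ.symm (j.succ.succ) = Fin.natAdd 2 j := by
      intro j; apply Fin.ext; simp [hφ]; omega
    have ha : U (Fin.cast h2 (σ (Fin.castAdd (m+1) 0))) = U ((φ.permCongr σ) 0) := by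
      show U (φ (σ (Fin.castAdd (m+1) 0))) = _
      rw [Equiv.permCongr_apply, e0]
    have hb : U (Fin.cast h2 (σ (Fin.castAdd (m+1) 1))) = U ((φ.permCongr σ) 1) := by
      show U (φ (σ (Fin.castAdd (m+1) 1))) = _
      rw [Equiv.permCongr_apply, e1]
    have hc : (fun j => U (Fin.cast h2 (σ (Fin.natAdd 2 j))))
        = (fun j : Fin (m+1) => U ((φ.permCongr σ) j.succ.succ)) := by
      funext j
      show U (φ (σ (Fin.natAdd 2 j))) = _
      rw [Equiv.permCongr_apply, e2]
    rw [hs, ha, hb, hc]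
  rw [step1]
  -- step 2 : double decomposition
  set T : Fin (m+3) → Fin (m+2) → ℝ := fun p q =>
    (if p = 0 then (1:ℝ) else -1) * (if q = 0 then (1:ℝ) else -1) *
      A ![U p, U (Equiv.swap 0 p q.succ)] *
      B (fun j => U (Equiv.swap 0 p (Equiv.swap 0 q j.succ).succ)) with hT
  have key : ∀ (p : Fin (m+3)) (q : Fin (m+2)) (t : Equiv.Perm (Fin (m+1))),
      (((Equiv.Perm.sign (Equiv.Perm.decomposeFin.symm
          (p, Equiv.Perm.decomposeFin.symm (q, t))) : ℤ) : ℝ) *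
        A ![U ((Equiv.Perm.decomposeFin.symm (p, Equiv.Perm.decomposeFin.symm (q, t))) 0),
            U ((Equiv.Perm.decomposeFin.symm (p, Equiv.Perm.decomposeFin.symm (q, t))) 1)] *
        B (fun j => U ((Equiv.Perm.decomposeFin.symm
            (p, Equiv.Perm.decomposeFin.symm (q, t))) j.succ.succ)))
      = T p q := by
    intro p q t
    have hsgn : ((Equiv.Perm.sign (Equiv.Perm.decomposeFin.symm
          (p, Equiv.Perm.decomposeFin.symm (q, t))) : ℤ) : ℝ)
        = (if p = 0 then (1:ℝ) else -1) * ((if q = 0 then (1:ℝ) else -1) *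
            ((Equiv.Perm.sign t : ℤ) : ℝ)) := by
      rw [sign_decomp_real, sign_decomp_real]
    have h0' : (Equiv.Perm.decomposeFin.symm
        (p, Equiv.Perm.decomposeFin.symm (q, t))) 0 = p :=
      Equiv.Perm.decomposeFin_symm_apply_zero p _
    have h1' : (Equiv.Perm.decomposeFin.symm
        (p, Equiv.Perm.decomposeFin.symm (q, t))) 1 = Equiv.swap 0 p q.succ := by
      rw [Equiv.Perm.decomposeFin_symm_apply_one, Equiv.Perm.decomposeFin_symm_apply_zero]
    have h2' : (fun j : Fin (m+1) => U ((Equiv.Perm.decomposeFin.symm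
          (p, Equiv.Perm.decomposeFin.symm (q, t))) j.succ.succ))
        = (fun j : Fin (m+1) => U (Equiv.swap 0 p (Equiv.swap 0 q j.succ).succ)) ∘ t := by
      funext j
      show U _ = U _
      rw [Equiv.Perm.decomposeFin_symm_apply_succ, Equiv.Perm.decomposeFin_symm_apply_succ]
    rw [hsgn, h0', h1', h2', AlternatingMap.map_perm]
    have hsm : (Equiv.Perm.sign t) • B (fun j => U (Equiv.swap 0 p (Equiv.swap 0 q j.succ).succ))
        = ((Equiv.Perm.sign t : ℤ) : ℝ) *
            B (fun j => U (Equiv.swap 0 p (Equiv.swap 0 q j.succ).succ)) := by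
      rcases Int.units_eq_one_or (Equiv.Perm.sign t) with h | h <;> simp [h]
    rw [hsm]
    simp only [hT]
    rcases Int.units_eq_one_or (Equiv.Perm.sign t) with ht | ht <;>
      rw [ht] <;> push_cast <;> ring
  have step2 : (∑ τ : Equiv.Perm (Fin (m+3)), ((Equiv.Perm.sign τ : ℤ) : ℝ) *
        A ![U (τ 0), U (τ 1)] * B (fun j => U (τ j.succ.succ)))
      = ∑ p : Fin (m+3), ∑ q : Fin (m+2), ((m+1).factorial : ℝ) * T p q := by
    rw [sum_perm_succ]
    refine Finset.sum_congr rfl (fun p _ => ?_)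
    rw [sum_perm_succ]
    refine Finset.sum_congr rfl (fun q _ => ?_)
    rw [Finset.sum_congr rfl (fun t _ => key p q t), Finset.sum_const, Finset.card_univ,
      Fintype.card_perm, Fintype.card_fin, nsmul_eq_mul]
  rw [step2]
  -- now evaluate the double sum over p, q
  have succ_succ_ne_zero : ∀ r : Fin (m+1), (r.succ.succ : Fin (m+3)) ≠ 0 :=
    fun r => Fin.succ_ne_zero _
  have succ_succ_ne_one : ∀ r : Fin (m+1), (r.succ.succ : Fin (m+3)) ≠ 1 := by
    intro r hr
    rw [← Fin.succ_zero_eq_one] at hr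
    exact Fin.succ_ne_zero r ((Fin.succ_injective _) hr)
  have c00 : T 0 0 = A ![a, b] * B v := by
    simp only [hT]
    simp [Equiv.swap_self, hU0, hU1, hU2, Fin.succ_zero_eq_one]
  have c0s : ∀ k : Fin (m+1), T 0 k.succ = -(A ![a, v k] * B (Function.update v k b)) := by
    intro k
    simp only [hT, Equiv.swap_self, Equiv.refl_apply]
    have hfun : (fun j : Fin (m+1) => U (((Equiv.swap (0 : Fin (m+2)) k.succ) j.succ).succ))
        = Function.update v k b := by
      funext j
      rcases eq_or_ne j k with h | h
      · subst h
        rw [Equiv.swap_apply_right, Fin.succ_zero_eq_one, hU1, Function.update_self]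
      · rw [Equiv.swap_apply_of_ne_of_ne (Fin.succ_ne_zero j)
          (fun hh => h ((Fin.succ_injective _) hh)), hU2, Function.update_of_ne h]
    rw [hfun, hU0, hU2]
    simp [Fin.succ_ne_zero]
  have c10 : T 1 0 = A ![a, b] * B v := by
    simp only [hT]
    have e1 : U ((Equiv.swap (0 : Fin (m+3)) 1) ((0 : Fin (m+2)).succ)) = a := by
      rw [Fin.succ_zero_eq_one, Equiv.swap_apply_right, hU0]
    have hfun : (fun j : Fin (m+1) =>
          U ((Equiv.swap (0 : Fin (m+3)) 1) (((Equiv.swap (0 : Fin (m+2)) 0) j.succ).succ)))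
        = v := by
      funext j
      rw [Equiv.swap_self, Equiv.refl_apply,
        Equiv.swap_apply_of_ne_of_ne (succ_succ_ne_zero j) (succ_succ_ne_one j), hU2]
    rw [e1, hfun, hU1]
    have : (1 : Fin (m+3)) ≠ 0 := by
      rw [← Fin.succ_zero_eq_one]; exact Fin.succ_ne_zero _
    simp [this, alt2_swap A a b]
  have c1s : ∀ k : Fin (m+1), T 1 k.succ = A ![b, v k] * B (Function.update v k a) := by
    intro k
    simp only [hT]
    have e1 : U ((Equiv.swap (0 : Fin (m+3)) 1) (k.succ.succ)) = v k := by
      rw [Equiv.swap_apply_of_ne_of_ne (succ_succ_ne_zero k) (succ_succ_ne_one k), hU2]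
    have hfun : (fun j : Fin (m+1) =>
          U ((Equiv.swap (0 : Fin (m+3)) 1) (((Equiv.swap (0 : Fin (m+2)) k.succ) j.succ).succ)))
        = Function.update v k a := by
      funext j
      rcases eq_or_ne j k with h | h
      · subst h
        rw [Equiv.swap_apply_right, Fin.succ_zero_eq_one, Equiv.swap_apply_right, hU0,
          Function.update_self]
      · rw [Equiv.swap_apply_of_ne_of_ne (Fin.succ_ne_zero j)
            (fun hh => h ((Fin.succ_injective _) hh)),
          Equiv.swap_apply_of_ne_of_ne (succ_succ_ne_zero j) (succ_succ_ne_one j),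
          hU2, Function.update_of_ne h]
    rw [e1, hfun, hU1]
    have h1 : (1 : Fin (m+3)) ≠ 0 := by
      rw [← Fin.succ_zero_eq_one]; exact Fin.succ_ne_zero _
    simp [h1, Fin.succ_ne_zero]
  have cs0 : ∀ r : Fin (m+1), T r.succ.succ 0 = A ![b, v r] * B (Function.update v r a) := by
    intro r
    simp only [hT]
    have e0 : U (r.succ.succ : Fin (m+3)) = v r := hU2 r
    have e1 : U ((Equiv.swap (0 : Fin (m+3)) r.succ.succ) ((0 : Fin (m+2)).succ)) = b := by
      rw [Fin.succ_zero_eq_one,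
        Equiv.swap_apply_of_ne_of_ne (by rw [← Fin.succ_zero_eq_one]; exact Fin.succ_ne_zero _)
          (Ne.symm (succ_succ_ne_one r)), hU1]
    have hfun : (fun j : Fin (m+1) =>
          U ((Equiv.swap (0 : Fin (m+3)) r.succ.succ)
            (((Equiv.swap (0 : Fin (m+2)) 0) j.succ).succ)))
        = Function.update v r a := by
      funext j
      rw [Equiv.swap_self, Equiv.refl_apply]
      rcases eq_or_ne j r with h | h
      · subst h
        rw [Equiv.swap_apply_right, hU0, Function.update_self]
      · rw [Equiv.swap_apply_of_ne_of_ne (succ_succ_ne_zero j)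
            (fun hh => h (by
              have := (Fin.succ_injective _) hh
              exact (Fin.succ_injective _) this)), hU2, Function.update_of_ne h]
    rw [e0, e1, hfun]
    simp [succ_succ_ne_zero r, alt2_swap A b (v r)]
  have css : ∀ r k : Fin (m+1), T r.succ.succ k.succ
      = if k = r then -(A ![a, v r] * B (Function.update v r b)) else 0 := by
    intro r k
    simp only [hT]
    rcases eq_or_ne k r with h | h
    · subst h
      have e1 : U ((Equiv.swap (0 : Fin (m+3)) k.succ.succ) (k.succ.succ)) = a := by
        rw [Equiv.swap_apply_right, hU0]
      have hfun : (fun j : Fin (m+1) =>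
            U ((Equiv.swap (0 : Fin (m+3)) k.succ.succ)
              (((Equiv.swap (0 : Fin (m+2)) k.succ) j.succ).succ)))
          = Function.update v k b := by
        funext j
        rcases eq_or_ne j k with h' | h'
        · subst h'
          rw [Equiv.swap_apply_right, Fin.succ_zero_eq_one,
            Equiv.swap_apply_of_ne_of_ne
              (by rw [← Fin.succ_zero_eq_one]; exact Fin.succ_ne_zero _)
              (Ne.symm (succ_succ_ne_one j)), hU1, Function.update_self]
        · rw [Equiv.swap_apply_of_ne_of_ne (Fin.succ_ne_zero j)
              (fun hh => h' ((Fin.succ_injective _) hh)),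
            Equiv.swap_apply_of_ne_of_ne (succ_succ_ne_zero j)
              (fun hh => h' (by
                have := (Fin.succ_injective _) hh
                exact (Fin.succ_injective _) this)), hU2, Function.update_of_ne h']
      rw [e1, hfun, hU2]
      simp [succ_succ_ne_zero k, Fin.succ_ne_zero, alt2_swap A a (v k)]
    · have e1 : U ((Equiv.swap (0 : Fin (m+3)) r.succ.succ) (k.succ.succ)) = v k := by
        rw [Equiv.swap_apply_of_ne_of_ne (succ_succ_ne_zero k)
          (fun hh => h (by
            have := (Fin.succ_injective _) hh
            exact (Fin.succ_injective _) this)), hU2]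
      rw [e1, hU2, h0 r k]
      simp [h]
  -- assemble
  have hres : ∑ p : Fin (m+3), ∑ q : Fin (m+2), ((m+1).factorial : ℝ) * T p q
      = ((m+1).factorial : ℝ) * ∑ p : Fin (m+3), ∑ q : Fin (m+2), T p q := by
    rw [Finset.mul_sum]
    exact Finset.sum_congr rfl (fun p _ => by rw [Finset.mul_sum])
  rw [hres]
  congr 1
  rw [Fin.sum_univ_succ]
  have inner0 : ∑ q : Fin (m+2), T 0 q
      = A ![a, b] * B v - ∑ k : Fin (m+1), A ![a, v k] * B (Function.update v k b) := by
    rw [Fin.sum_univ_succ, c00, Finset.sum_congr rfl (fun k _ => c0s k), Finset.sum_neg_distrib]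
    ring
  have houter : ∑ p : Fin (m+2), ∑ q : Fin (m+2), T p.succ q
      = (A ![a, b] * B v + ∑ k : Fin (m+1), A ![b, v k] * B (Function.update v k a))
        + ∑ r : Fin (m+1), (A ![b, v r] * B (Function.update v r a)
            - A ![a, v r] * B (Function.update v r b)) := by
    rw [Fin.sum_univ_succ]
    congr 1
    · have : ((0 : Fin (m+2)).succ : Fin (m+3)) = 1 := Fin.succ_zero_eq_one
      rw [this, Fin.sum_univ_succ, c10, Finset.sum_congr rfl (fun k _ => c1s k)]
    · refine Finset.sum_congr rfl (fun r _ => ?_)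
      rw [Fin.sum_univ_succ, cs0, Finset.sum_congr rfl (fun k _ => css r k),
        Finset.sum_ite_eq' Finset.univ r
          (fun _ => -(A ![a, v r] * B (Function.update v r b)))]
      simp only [Finset.mem_univ, if_true]
      ring
  rw [inner0, houter, Finset.sum_sub_distrib]
  ring


/-- on a symplectic manifold `(X, ω)` of dimension `2n` (here `n = m+1`),
for an `n`-form `β` with `ω ∧ β = 0`, a Lagrangian submanifold `Λ` (with tangent spaces `T`),
and Hamiltonian functions `H, K` with Hamiltonian vector fields `ξ, ζ`, the restriction to `Λ`
of `{H,K}·β` equals that of `−(dH ∧ i_ζ β − dK ∧ i_ξ β)`. -/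
theorem calabi_poisson_pointwise_identity
    {E : Type*} [NormedAddCommGroup E] [NormedSpace ℝ E] (m : ℕ)
    (hdim : Module.finrank ℝ E = 2 * (m + 1))
    (ω : E → (Fin 2 → E) → ℝ)
    (hωalt : IsAltForm 2 ω) (hωsm : SmoothForm 2 ω)
    (hωclosed : ∀ x v, extDerivF 2 ω x v = 0)
    (hωnd : ∀ x u, (∀ w, ω x ![u, w] = 0) → u = 0)
    (β : E → (Fin (m+1) → E) → ℝ) (hβalt : IsAltForm (m+1) β) (hβsm : SmoothForm (m+1) β)
    (hωβ : ∀ x v, wedgeF ω β x v = 0)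
    (Λ : Set E) (T : E → Submodule ℝ E)
    (hT : ∀ x ∈ Λ, Module.finrank ℝ (T x) = m + 1)
    (hLag : ∀ x ∈ Λ, ∀ u ∈ T x, ∀ w ∈ T x, ω x ![u, w] = 0)
    (H K : E → ℝ) (hH : ContDiff ℝ (⊤ : ℕ∞) H) (hK : ContDiff ℝ (⊤ : ℕ∞) K)
    (ξ ζ : E → E)
    (hξ : ∀ x w, ω x ![ξ x, w] = fderiv ℝ H x w)
    (hζ : ∀ x w, ω x ![ζ x, w] = fderiv ℝ K x w) :
    ∀ x ∈ Λ, ∀ v : Fin (m+1) → E, (∀ i, v i ∈ T x) →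
      ω x ![ζ x, ξ x] * β x v =
        -( wedgeF (fun y (w : Fin 1 → E) => fderiv ℝ H y (w 0)) (iprod ζ β) x
              (fun i => v (Fin.cast (Nat.add_comm 1 m) i))
          - wedgeF (fun y (w : Fin 1 → E) => fderiv ℝ K y (w 0)) (iprod ξ β) x
              (fun i => v (Fin.cast (Nat.add_comm 1 m) i)) ) := by
  intro x hx v hv
  obtain ⟨A, hA⟩ := hωalt x
  obtain ⟨B, hB⟩ := hβalt x
  have h2 : 2 + (m+1) = m + 3 := by omega
  set U : Fin (m+3) → E := Fin.cons (ζ x) (Fin.cons (ξ x) v) with hUdef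
  have h0 : ∀ i j, A ![v i, v j] = 0 := fun i j => by
    rw [← hA]; exact hLag x hx _ (hv i) _ (hv j)
  have hωA : ∀ f : Fin 2 → E, ω x f = A ![f 0, f 1] := fun f => by
    rw [hA, vec2_eta]
  -- instantiate the hypothesis ω ∧ β = 0
  have hz := hωβ x (fun i => U (Fin.cast h2 i))
  unfold wedgeF at hz
  simp only [hωA, hB] at hz
  rw [wedge_two_sum h2 A B (ζ x) (ξ x) v h0 U hUdef] at hz
  have f1 : (0:ℝ) < ((Nat.factorial 2 * Nat.factorial (m+1) : ℕ) : ℝ) := by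
    exact_mod_cast Nat.mul_pos (Nat.factorial_pos 2) (Nat.factorial_pos (m+1))
  have f2 : (0:ℝ) < ((m+1).factorial : ℝ) := by exact_mod_cast Nat.factorial_pos (m+1)
  have hX : 2 * (A ![ζ x, ξ x] * B v)
      - 2 * ∑ k, A ![ζ x, v k] * B (Function.update v k (ξ x))
      + 2 * ∑ k, A ![ξ x, v k] * B (Function.update v k (ζ x)) = 0 := by
    rcases mul_eq_zero.mp hz with h | h
    · exact absurd h (by positivity)
    · rcases mul_eq_zero.mp h with h' | h'
      · exact absurd h' (ne_of_gt f2)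
      · exact h'
  -- rewrite the right-hand side wedges
  have eH : wedgeF (fun y (w : Fin 1 → E) => fderiv ℝ H y (w 0)) (iprod ζ β) x
        (fun i => v (Fin.cast (Nat.add_comm 1 m) i))
      = ∑ p, fderiv ℝ H x (v p) * B (Function.update v p (ζ x)) := by
    unfold wedgeF iprod
    simp only [hB]
    exact wedge_one_eval B (fun e => fderiv ℝ H x e) (ζ x) v
  have eK : wedgeF (fun y (w : Fin 1 → E) => fderiv ℝ K y (w 0)) (iprod ξ β) x
        (fun i => v (Fin.cast (Nat.add_comm 1 m) i))
      = ∑ p, fderiv ℝ K x (v p) * B (Function.update v p (ξ x)) := by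
    unfold wedgeF iprod
    simp only [hB]
    exact wedge_one_eval B (fun e => fderiv ℝ K x e) (ξ x) v
  rw [eH, eK, hA, hB]
  have hAζ : ∀ w, A ![ζ x, w] = fderiv ℝ K x w := fun w => by rw [← hA]; exact hζ x w
  have hAξ : ∀ w, A ![ξ x, w] = fderiv ℝ H x w := fun w => by rw [← hA]; exact hξ x w
  simp only [hAζ, hAξ] at hX
  rw [hAζ (ξ x)]
  linarith [hX]
end
end

section
/- Let X be a smooth manifold, ω a symplectic form on X, β an n-form with ω ∧ β = 0 (dim X = 2n), Λ ⊂ X a compact oriented Lagrangian submanifold, and H, K : X → ℝ smooth functions with Hamiltonian vector fields ξ, ζ. Then ∫_Λ {H,K} β = ∫_Λ (H · d(i_ζ β) − K · d(i_ξ β)). -/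
open scoped BigOperators
noncomputable section

variable {E : Type*} [NormedAddCommGroup E] [NormedSpace ℝ E]

lemma vec2_upd_left (u u' w : E) : (![u', w] : Fin 2 → E) = Function.update ![u, w] 0 u' := by
  funext i; fin_cases i <;> simp

lemma vec2_upd_right (u w w' : E) : (![u, w'] : Fin 2 → E) = Function.update ![u, w] 1 w' := by
  funext i; fin_cases i <;> simp

lemma smooth_hamiltonian_vf (m : ℕ)
    (hdim : Module.finrank ℝ E = 2 * (m + 1))
    (ω : E → (Fin 2 → E) → ℝ)
    (hωalt : IsAltForm 2 ω) (hωsm : SmoothForm 2 ω)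
    (hωnd : ∀ x u, (∀ w, ω x ![u, w] = 0) → u = 0)
    (H : E → ℝ) (hH : ContDiff ℝ (⊤ : ℕ∞) H)
    (ξ : E → E) (hξ : ∀ x w, ω x ![ξ x, w] = fderiv ℝ H x w) :
    ContDiff ℝ (⊤ : ℕ∞) ξ := by
  have hfd : FiniteDimensional ℝ E := FiniteDimensional.of_finrank_pos (by omega)
  -- bilinear form at each point
  have key : ∀ x : E, ∃ b : LinearMap.BilinForm ℝ E, ∀ u w, b u w = ω x ![u, w] := by
    intro x
    obtain ⟨A, hA⟩ := hωalt x
    refine ⟨LinearMap.mk₂ ℝ (fun u w => ω x ![u, w]) ?_ ?_ ?_ ?_, fun u w => rfl⟩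
    · intro u u' w
      show ω x ![u + u', w] = ω x ![u, w] + ω x ![u', w]
      rw [hA, hA, hA, vec2_upd_left u (u + u') w, vec2_upd_left u u w, vec2_upd_left u u' w,
        A.map_update_add]
      simp [Function.update_idem]
    · intro c u w
      show ω x ![c • u, w] = c * ω x ![u, w]
      rw [hA, hA, vec2_upd_left u (c • u) w, vec2_upd_left u u w, A.map_update_smul,
        smul_eq_mul]
      simp [Function.update_idem]
    · intro u w w'
      show ω x ![u, w + w'] = ω x ![u, w] + ω x ![u, w']
      rw [hA, hA, hA, vec2_upd_right u w (w + w'), vec2_upd_right u w w, vec2_upd_right u w w',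
        A.map_update_add]
      simp [Function.update_idem]
    · intro c u w
      show ω x ![u, c • w] = c * ω x ![u, w]
      rw [hA, hA, vec2_upd_right u w (c • w), vec2_upd_right u w w, A.map_update_smul,
        smul_eq_mul]
      simp [Function.update_idem]
  choose b hb using key
  have hnd : ∀ x, (b x).Nondegenerate := by
    intro x
    refine LinearMap.BilinForm.Nondegenerate.ofSeparatingLeft ?_
    intro u hu
    exact hωnd x u (fun w => by rw [← hb x u w]; exact hu w)
  -- continuous linear equivalence E ≃L (E →L ℝ)
  let e : E → (E ≃L[ℝ] (E →L[ℝ] ℝ)) := fun x =>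
    (((b x).toDual (hnd x)).trans LinearMap.toContinuousLinearMap).toContinuousLinearEquiv
  have he : ∀ x u w, (e x) u w = ω x ![u, w] := by
    intro x u w
    have : (e x) u = LinearMap.toContinuousLinearMap (((b x).toDual (hnd x)) u) := rfl
    rw [this]
    simp only [LinearMap.coe_toContinuousLinearMap']
    rw [show (((b x).toDual (hnd x)) u) w = b x u w from rfl, hb]
  -- smoothness of x ↦ e x as CLM
  set bas := Module.finBasis ℝ E with hbas
  have ht : ContDiff ℝ (⊤ : ℕ∞) (fun x => (e x : E →L[ℝ] (E →L[ℝ] ℝ))) := by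
    have hrepr : ∀ x : E, (e x : E →L[ℝ] (E →L[ℝ] ℝ)) =
        ∑ i, ∑ j, ω x ![bas i, bas j] •
          ((LinearMap.toContinuousLinearMap (bas.coord i)).smulRight
            (LinearMap.toContinuousLinearMap (bas.coord j))) := by
      intro x
      ext u w
      simp only [ContinuousLinearEquiv.coe_coe, ContinuousLinearMap.coe_coe, ContinuousLinearMap.sum_apply,
        ContinuousLinearMap.smul_apply, ContinuousLinearMap.smulRight_apply,
        LinearMap.coe_toContinuousLinearMap', smul_eq_mul]
      rw [he]
      have expand : (b x) u w = ∑ i, ∑ j, (bas.repr u) i * ((bas.repr w) j * ((b x) (bas i) (bas j))) := by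
        conv_lhs => rw [← bas.sum_repr u, ← bas.sum_repr w]
        rw [LinearMap.BilinForm.sum_left]
        refine Finset.sum_congr rfl fun i _ => ?_
        rw [LinearMap.BilinForm.sum_right]
        refine Finset.sum_congr rfl fun j _ => ?_
        rw [LinearMap.BilinForm.smul_left, LinearMap.BilinForm.smul_right]
      rw [← hb, expand]
      refine Finset.sum_congr rfl fun i _ => Finset.sum_congr rfl fun j _ => ?_
      rw [hb]
      simp only [Module.Basis.coord_apply]
      ring
    rw [show (fun x => (e x : E →L[ℝ] (E →L[ℝ] ℝ))) = fun x =>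
        ∑ i, ∑ j, ω x ![bas i, bas j] •
          ((LinearMap.toContinuousLinearMap (bas.coord i)).smulRight
            (LinearMap.toContinuousLinearMap (bas.coord j))) from funext hrepr]
    haveI : IsBoundedSMul ℝ (E →L[ℝ] E →L[ℝ] ℝ) :=
      @NormedSpace.toIsBoundedSMul ℝ (E →L[ℝ] E →L[ℝ] ℝ) _ _ inferInstance
    exact ContDiff.sum (fun i _ => ContDiff.sum (fun j _ =>
      (hωsm ![bas i, bas j]).smul contDiff_const))
  -- inverse is smooth
  have hinv : ContDiff ℝ (⊤ : ℕ∞) (fun x => (ContinuousLinearMap.inverse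
      ((e x : E →L[ℝ] (E →L[ℝ] ℝ))))) := by
    rw [contDiff_iff_contDiffAt]
    intro x₀
    exact (contDiffAt_map_inverse (e x₀)).comp x₀ ht.contDiffAt
  have hdH : ContDiff ℝ (⊤ : ℕ∞) (fun x => fderiv ℝ H x) := hH.fderiv_right (by simp)
  have hξeq : ξ = fun x => (ContinuousLinearMap.inverse
      ((e x : E →L[ℝ] (E →L[ℝ] ℝ)))) (fderiv ℝ H x) := by
    funext x
    rw [ContinuousLinearMap.inverse_equiv (e x)]
    have : (e x) (ξ x) = fderiv ℝ H x := by
      ext w; rw [he]; exact hξ x w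
    rw [← this]
    simp
  rw [hξeq]
  exact hinv.clm_apply hdH

lemma alt_two_antisym (A : E [⋀^Fin 2]→ₗ[ℝ] ℝ) (x y : E) :
    A ![y, x] = - A ![x, y] := by
  have h : ((![x, y] : Fin 2 → E) ∘ ⇑(Equiv.swap (0 : Fin 2) 1)) = ![y, x] := by
    funext i
    fin_cases i <;> simp
  have h2 := A.map_swap (v := ![x, y]) (i := (0 : Fin 2)) (j := 1) (by decide)
  rw [h] at h2
  exact h2

lemma perm_smul_real (u : ℤˣ) (r : ℝ) : (u : ℤ) • r = ((u : ℤ) : ℝ) * r := by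
  simp

lemma alt_cons_removeNth {n : ℕ} (B : E [⋀^Fin (n+1)]→ₗ[ℝ] ℝ) (v : Fin (n+1) → E)
    (i : Fin (n+1)) (c : E) :
    B (Fin.cons c (i.removeNth v)) = (-1 : ℝ)^(i : ℕ) * B (Function.update v i c) := by
  have hcomp : (Fin.cons c (i.removeNth v) : Fin (n+1) → E)
      = (Function.update v i c) ∘ ⇑(i.cycleRange⁻¹) := by
    funext j
    refine Fin.cases ?_ (fun t => ?_) j
    · simp only [Function.comp_apply]
      rw [Fin.cons_zero, Equiv.Perm.inv_def, Fin.cycleRange_symm_zero, Function.update_self]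
    · simp only [Function.comp_apply]
      rw [Fin.cons_succ, Equiv.Perm.inv_def, Fin.cycleRange_symm_succ,
        Function.update_of_ne (Fin.succAbove_ne i t)]
      rfl
  have hsign : Equiv.Perm.sign i.cycleRange⁻¹ = (-1 : ℤˣ)^(i : ℕ) := by
    rw [map_inv, Fin.sign_cycleRange, ← inv_pow]
    norm_num
  rw [hcomp, B.map_perm, hsign, Units.smul_def, perm_smul_real]
  push_cast
  ring

lemma double_sum_split (n : ℕ) (X : Fin (n+3) → Fin (n+2) → ℝ) :
    ∑ a, ∑ b, X a b
      = (∑ b, X 0 b) + (∑ b, X 1 b) + ∑ k : Fin (n+1), ∑ b, X k.succ.succ b := by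
  rw [Fin.sum_univ_succ (f := fun a : Fin (n+3) => ∑ b, X a b),
    Fin.sum_univ_succ (f := fun a : Fin (n+2) => ∑ b, X a.succ b),
    Fin.succ_zero_eq_one]
  ring

lemma perm_sum_expand (n : ℕ) (A : E [⋀^Fin 2]→ₗ[ℝ] ℝ) (B : E [⋀^Fin (n+1)]→ₗ[ℝ] ℝ)
    (zet xi : E) (v : Fin (n+1) → E)
    (hA0 : ∀ i j : Fin (n+1), A ![v i, v j] = 0) :
    (∑ σ : Equiv.Perm (Fin (2 + (n+1))), ((Equiv.Perm.sign σ : ℤ) : ℝ) *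
        (A fun i => (Fin.cons zet (Fin.cons xi v) : Fin (n+3) → E)
          (Fin.cast (by omega : 2+(n+1) = n+3) (σ (Fin.castAdd (n+1) i)))) *
        (B fun j => (Fin.cons zet (Fin.cons xi v) : Fin (n+3) → E)
          (Fin.cast (by omega : 2+(n+1) = n+3) (σ (Fin.natAdd 2 j))))) =
      2 * (n+1).factorial *
        (A ![zet, xi] * B v
          + ∑ i, A ![xi, v i] * B (Function.update v i zet)
          - ∑ i, A ![zet, v i] * B (Function.update v i xi)) := by
  have hc : 2 + (n+1) = n+3 := by omega
  set uu : Fin (n+3) → E := Fin.cons zet (Fin.cons xi v) with huu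
  have step1 : (∑ σ : Equiv.Perm (Fin (2 + (n+1))), ((Equiv.Perm.sign σ : ℤ) : ℝ) *
        (A fun i => uu (Fin.cast hc (σ (Fin.castAdd (n+1) i)))) *
        (B fun j => uu (Fin.cast hc (σ (Fin.natAdd 2 j))))) =
      ∑ τ : Equiv.Perm (Fin (n+3)), ((Equiv.Perm.sign τ : ℤ) : ℝ) *
        (A ![uu (τ 0), uu (τ 1)]) * (B fun j => uu (τ j.succ.succ)) := by
    refine Fintype.sum_equiv ((finCongr hc).permCongr) _ _ (fun σ => ?_)
    have harg1 : (fun i : Fin 2 => uu (Fin.cast hc (σ (Fin.castAdd (n+1) i))))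
        = ![uu (((finCongr hc).permCongr σ) 0), uu (((finCongr hc).permCongr σ) 1)] := by
      funext i
      fin_cases i <;>
      · simp only [Equiv.permCongr_apply, finCongr_symm, finCongr_apply,
          Matrix.cons_val_zero, Matrix.cons_val_one, Matrix.head_cons]
        exact congrArg (fun k => uu (Fin.cast hc (σ k))) (Fin.ext (by simp))
    have harg2 : (fun j : Fin (n+1) => uu (Fin.cast hc (σ (Fin.natAdd 2 j))))
        = (fun j : Fin (n+1) => uu ((((finCongr hc).permCongr σ)) j.succ.succ)) := by
      funext j
      simp only [Equiv.permCongr_apply, finCongr_symm, finCongr_apply]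
      exact congrArg (fun k => uu (Fin.cast hc (σ k))) (Fin.ext (by simp; omega))
    rw [Equiv.Perm.sign_permCongr, ← harg1, ← harg2]
  rw [step1]
  have step2 : ∀ f : Equiv.Perm (Fin (n+3)) → ℝ, (∑ τ, f τ)
      = ∑ a : Fin (n+3), ∑ b : Fin (n+2), ∑ π : Equiv.Perm (Fin (n+1)),
          f (Equiv.Perm.decomposeFin.symm (a, Equiv.Perm.decomposeFin.symm (b, π))) := by
    intro f
    rw [← Equiv.sum_comp (Equiv.Perm.decomposeFin.symm) f, Fintype.sum_prod_type]
    refine Finset.sum_congr rfl fun a _ => ?_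
    rw [← Equiv.sum_comp (Equiv.Perm.decomposeFin.symm)
      (fun e => f (Equiv.Perm.decomposeFin.symm (a, e))), Fintype.sum_prod_type]
  rw [step2]
  -- the value of each inner summand
  have hterm : ∀ (a : Fin (n+3)) (b : Fin (n+2)) (π : Equiv.Perm (Fin (n+1))),
      ((Equiv.Perm.sign (Equiv.Perm.decomposeFin.symm
          (a, Equiv.Perm.decomposeFin.symm (b, π))) : ℤ) : ℝ) *
        (A ![uu ((Equiv.Perm.decomposeFin.symm (a, Equiv.Perm.decomposeFin.symm (b, π))) 0),
             uu ((Equiv.Perm.decomposeFin.symm (a, Equiv.Perm.decomposeFin.symm (b, π))) 1)]) *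
        (B fun j => uu ((Equiv.Perm.decomposeFin.symm
            (a, Equiv.Perm.decomposeFin.symm (b, π))) j.succ.succ))
      = (if a = 0 then (1:ℝ) else -1) * (if b = 0 then (1:ℝ) else -1) *
          (A ![uu a, uu (Equiv.swap 0 a b.succ)]) *
          (B fun t => uu (Equiv.swap 0 a ((Equiv.swap 0 b t.succ).succ))) := by
    intro a b π
    have hB : (fun j : Fin (n+1) => uu ((Equiv.Perm.decomposeFin.symm
          (a, Equiv.Perm.decomposeFin.symm (b, π))) j.succ.succ))
        = (fun t : Fin (n+1) => uu (Equiv.swap 0 a ((Equiv.swap 0 b t.succ).succ))) ∘ π := by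
      funext j
      simp only [Function.comp_apply]
      rw [show (j.succ.succ : Fin (n+3)) = ((j.succ : Fin (n+2)).succ : Fin (n+3)) from rfl,
        Equiv.Perm.decomposeFin_symm_apply_succ,
        Equiv.Perm.decomposeFin_symm_apply_succ]
    rw [hB, B.map_perm, Equiv.Perm.decomposeFin_symm_apply_zero,
      Equiv.Perm.decomposeFin_symm_apply_one, Equiv.Perm.decomposeFin_symm_apply_zero,
      Equiv.Perm.decomposeFin.symm_sign, Equiv.Perm.decomposeFin.symm_sign]
    by_cases ha : a = 0 <;> by_cases hb : b = 0 <;>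
      rcases Int.units_eq_one_or (Equiv.Perm.sign π) with h | h <;>
      simp [ha, hb, h, Units.smul_def] <;> ring
  have step3 : ∀ (a : Fin (n+3)) (b : Fin (n+2)),
      (∑ π : Equiv.Perm (Fin (n+1)),
        ((Equiv.Perm.sign (Equiv.Perm.decomposeFin.symm
            (a, Equiv.Perm.decomposeFin.symm (b, π))) : ℤ) : ℝ) *
        (A ![uu ((Equiv.Perm.decomposeFin.symm (a, Equiv.Perm.decomposeFin.symm (b, π))) 0),
             uu ((Equiv.Perm.decomposeFin.symm (a, Equiv.Perm.decomposeFin.symm (b, π))) 1)]) *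
        (B fun j => uu ((Equiv.Perm.decomposeFin.symm
            (a, Equiv.Perm.decomposeFin.symm (b, π))) j.succ.succ)))
      = ((n+1).factorial : ℝ) * ((if a = 0 then (1:ℝ) else -1) * (if b = 0 then (1:ℝ) else -1) *
          (A ![uu a, uu (Equiv.swap 0 a b.succ)]) *
          (B fun t => uu (Equiv.swap 0 a ((Equiv.swap 0 b t.succ).succ)))) := by
    intro a b
    rw [Finset.sum_congr rfl (fun π _ => hterm a b π), Finset.sum_const, Finset.card_univ,
      Fintype.card_perm, Fintype.card_fin, nsmul_eq_mul]
  calc (∑ a : Fin (n+3), ∑ b : Fin (n+2), ∑ π : Equiv.Perm (Fin (n+1)), _)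
      = ∑ a : Fin (n+3), ∑ b : Fin (n+2),
          ((n+1).factorial : ℝ) * ((if a = 0 then (1:ℝ) else -1) * (if b = 0 then (1:ℝ) else -1) *
          (A ![uu a, uu (Equiv.swap 0 a b.succ)]) *
          (B fun t => uu (Equiv.swap 0 a ((Equiv.swap 0 b t.succ).succ)))) := by
        exact Finset.sum_congr rfl fun a _ => Finset.sum_congr rfl fun b _ => step3 a b
    _ = 2 * (n+1).factorial *
        (A ![zet, xi] * B v
          + ∑ i, A ![xi, v i] * B (Function.update v i zet)
          - ∑ i, A ![zet, v i] * B (Function.update v i xi)) := by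
        have uu1 : uu 1 = xi := by rw [huu, ← Fin.succ_zero_eq_one, Fin.cons_succ, Fin.cons_zero]
        have uu0 : uu 0 = zet := by rw [huu, Fin.cons_zero]
        have uus : ∀ j : Fin (n+1), uu j.succ.succ = v j := fun j => by
          rw [huu, Fin.cons_succ, Fin.cons_succ]
        have hne1 : ∀ j : Fin (n+1), (j.succ.succ : Fin (n+3)) ≠ 1 := by
          intro j
          rw [← Fin.succ_zero_eq_one]
          exact fun h => Fin.succ_ne_zero j (Fin.succ_injective _ h)
        have hness : ∀ x y : Fin (n+1), x ≠ y → (x.succ.succ : Fin (n+3)) ≠ y.succ.succ := by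
          intro x y hxy h
          exact hxy (Fin.succ_injective _ (Fin.succ_injective _ h))
        simp only [← Finset.mul_sum]
        have row0 : (∑ b : Fin (n+2),
              ((if (0:Fin (n+3)) = 0 then (1:ℝ) else -1) * if b = 0 then (1:ℝ) else -1) *
                A ![uu 0, uu ((Equiv.swap 0 0) b.succ)] *
                B fun t => uu ((Equiv.swap 0 0) ((Equiv.swap 0 b) t.succ).succ))
            = A ![zet, xi] * B v
              + ∑ i : Fin (n+1), -(A ![zet, v i] * B (Function.update v i xi)) := by
          rw [Fin.sum_univ_succ]
          congr 1
          · simp [Equiv.swap_self, Fin.succ_zero_eq_one, uu0, uu1, uus]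
          · refine Finset.sum_congr rfl fun i _ => ?_
            have hBe : (fun t => uu ((Equiv.swap (0:Fin (n+3)) 0)
                  ((Equiv.swap (0:Fin (n+2)) i.succ) t.succ).succ))
                = Function.update v i xi := by
              funext t
              rcases eq_or_ne t i with rfl | hti
              · rw [Equiv.swap_apply_right, Fin.succ_zero_eq_one, Equiv.swap_self,
                  Equiv.refl_apply, uu1, Function.update_self]
              · rw [Equiv.swap_apply_of_ne_of_ne (Fin.succ_ne_zero t)
                  (fun h => hti (Fin.succ_injective _ h)), Equiv.swap_self, Equiv.refl_apply,
                  uus, Function.update_of_ne hti]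
            rw [hBe]
            simp [Equiv.swap_self, Fin.succ_ne_zero, uu0, uus]
        have row1 : (∑ b : Fin (n+2),
              ((if (1:Fin (n+3)) = 0 then (1:ℝ) else -1) * if b = 0 then (1:ℝ) else -1) *
                A ![uu 1, uu ((Equiv.swap 0 1) b.succ)] *
                B fun t => uu ((Equiv.swap 0 1) ((Equiv.swap 0 b) t.succ).succ))
            = A ![zet, xi] * B v
              + ∑ i : Fin (n+1), A ![xi, v i] * B (Function.update v i zet) := by
          rw [Fin.sum_univ_succ]
          congr 1
          · have hBe : (fun t => uu ((Equiv.swap (0:Fin (n+3)) 1)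
                  ((Equiv.swap (0:Fin (n+2)) 0) t.succ).succ)) = v := by
              funext t
              rw [Equiv.swap_self, Equiv.refl_apply,
                Equiv.swap_apply_of_ne_of_ne (Fin.succ_ne_zero _) (hne1 t), uus]
            rw [hBe]
            rw [Fin.succ_zero_eq_one, Equiv.swap_apply_right, uu0, uu1, alt_two_antisym]
            simp
          · refine Finset.sum_congr rfl fun i _ => ?_
            have hBe : (fun t => uu ((Equiv.swap (0:Fin (n+3)) 1)
                  ((Equiv.swap (0:Fin (n+2)) i.succ) t.succ).succ))
                = Function.update v i zet := by
              funext t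
              rcases eq_or_ne t i with rfl | hti
              · rw [Equiv.swap_apply_right, Fin.succ_zero_eq_one, Equiv.swap_apply_right,
                  uu0, Function.update_self]
              · rw [Equiv.swap_apply_of_ne_of_ne (Fin.succ_ne_zero t)
                  (fun h => hti (Fin.succ_injective _ h)),
                  Equiv.swap_apply_of_ne_of_ne (Fin.succ_ne_zero _) (hne1 t),
                  uus, Function.update_of_ne hti]
            rw [hBe]
            have hA : uu ((Equiv.swap (0:Fin (n+3)) 1) i.succ.succ) = v i := by
              rw [Equiv.swap_apply_of_ne_of_ne (Fin.succ_ne_zero _) (hne1 i), uus]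
            rw [hA]
            simp [Fin.succ_ne_zero, uu1]
        have rowk : ∀ k : Fin (n+1), (∑ b : Fin (n+2),
              ((if (k.succ.succ:Fin (n+3)) = 0 then (1:ℝ) else -1) * if b = 0 then (1:ℝ) else -1) *
                A ![uu k.succ.succ, uu ((Equiv.swap 0 k.succ.succ) b.succ)] *
                B fun t => uu ((Equiv.swap 0 k.succ.succ) ((Equiv.swap 0 b) t.succ).succ))
            = A ![xi, v k] * B (Function.update v k zet)
              + -(A ![zet, v k] * B (Function.update v k xi)) := by
          intro k
          rw [Fin.sum_univ_succ]
          congr 1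
          · have hBe : (fun t => uu ((Equiv.swap (0:Fin (n+3)) k.succ.succ)
                  ((Equiv.swap (0:Fin (n+2)) 0) t.succ).succ))
                = Function.update v k zet := by
              funext t
              rcases eq_or_ne t k with rfl | htk
              · rw [Equiv.swap_self, Equiv.refl_apply, Equiv.swap_apply_right, uu0,
                  Function.update_self]
              · rw [Equiv.swap_self, Equiv.refl_apply,
                  Equiv.swap_apply_of_ne_of_ne (Fin.succ_ne_zero _) (hness t k htk),
                  uus, Function.update_of_ne htk]
            rw [hBe]
            have hA : uu ((Equiv.swap (0:Fin (n+3)) k.succ.succ) (0:Fin (n+2)).succ) = xi := by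
              rw [Fin.succ_zero_eq_one,
                Equiv.swap_apply_of_ne_of_ne (by simp [Fin.ext_iff]) (hne1 k).symm, uu1]
            rw [hA, uus, alt_two_antisym]
            simp [Fin.succ_ne_zero]
          · rw [Finset.sum_eq_single k]
            · have hBe : (fun t => uu ((Equiv.swap (0:Fin (n+3)) k.succ.succ)
                    ((Equiv.swap (0:Fin (n+2)) k.succ) t.succ).succ))
                  = Function.update v k xi := by
                funext t
                rcases eq_or_ne t k with rfl | htk
                · rw [Equiv.swap_apply_right, Fin.succ_zero_eq_one,
                    Equiv.swap_apply_of_ne_of_ne (by simp [Fin.ext_iff]) (hne1 t).symm,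
                    uu1, Function.update_self]
                · rw [Equiv.swap_apply_of_ne_of_ne (Fin.succ_ne_zero t)
                    (fun h => htk (Fin.succ_injective _ h)),
                    Equiv.swap_apply_of_ne_of_ne (Fin.succ_ne_zero _) (hness t k htk),
                    uus, Function.update_of_ne htk]
              rw [hBe, Equiv.swap_apply_right, uu0, uus, alt_two_antisym]
              simp [Fin.succ_ne_zero]
            · intro i _ hik
              have hA : uu ((Equiv.swap (0:Fin (n+3)) k.succ.succ) i.succ.succ) = v i := by
                rw [Equiv.swap_apply_of_ne_of_ne (Fin.succ_ne_zero _) (hness i k hik), uus]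
              rw [hA, uus, hA0]
              ring
            · intro h
              exact absurd (Finset.mem_univ k) h
        rw [double_sum_split, row0, row1, Finset.sum_congr rfl (fun k _ => rowk k)]
        simp only [Finset.sum_add_distrib, Finset.sum_neg_distrib]
        ring

lemma isalt_smul (m : ℕ) (f : E → ℝ) (ρ : E → (Fin m → E) → ℝ) (h : IsAltForm m ρ) :
    IsAltForm m (fun x v => f x * ρ x v) := by
  intro x
  obtain ⟨A, hA⟩ := h x
  refine ⟨f x • A, fun v => ?_⟩
  show f x * ρ x v = _
  rw [hA, AlternatingMap.smul_apply, smul_eq_mul]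

lemma isalt_iprod (m : ℕ) (ζ : E → E) (β : E → (Fin (m+1) → E) → ℝ)
    (h : IsAltForm (m+1) β) : IsAltForm m (iprod ζ β) := by
  intro x
  obtain ⟨B, hB⟩ := h x
  refine ⟨B.curryLeft (ζ x), fun v => ?_⟩
  rw [show iprod ζ β x v = β x (Fin.cons (ζ x) v) from rfl, hB]
  rfl

lemma smooth_smul_form (m : ℕ) (f : E → ℝ) (hf : ContDiff ℝ (⊤ : ℕ∞) f)
    (ρ : E → (Fin m → E) → ℝ) (hρ : SmoothForm m ρ) :
    SmoothForm m (fun x v => f x * ρ x v) :=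
  fun v => hf.mul (hρ v)

lemma smooth_iprod [FiniteDimensional ℝ E] (m : ℕ) (ζ : E → E) (hζ : ContDiff ℝ (⊤ : ℕ∞) ζ)
    (β : E → (Fin (m+1) → E) → ℝ) (hβalt : IsAltForm (m+1) β) (hβsm : SmoothForm (m+1) β) :
    SmoothForm m (iprod ζ β) := by
  intro w
  choose B hB using hβalt
  set bas := Module.finBasis ℝ E with hbas
  have hrepr : ∀ x, iprod ζ β x w
      = ∑ i, (LinearMap.toContinuousLinearMap (bas.coord i)) (ζ x) * β x (Fin.cons (bas i) w) := by
    intro x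
    set φ : E →ₗ[ℝ] ℝ :=
      { toFun := fun u => (B x) (Fin.cons u w),
        map_add' := fun a b => (B x).map_vecCons_add w a b,
        map_smul' := fun c a => (B x).map_vecCons_smul w c a } with hφ
    rw [show iprod ζ β x w = β x (Fin.cons (ζ x) w) from rfl, hB,
      show (B x) (Fin.cons (ζ x) w) = φ (ζ x) from rfl]
    conv_lhs => rw [← bas.sum_repr (ζ x)]
    rw [map_sum]
    refine Finset.sum_congr rfl fun i _ => ?_
    rw [map_smul, smul_eq_mul, hB]
    simp only [Module.Basis.coord_apply, LinearMap.coe_toContinuousLinearMap']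
    rfl
  rw [show (fun x => iprod ζ β x w) = fun x =>
      ∑ i, (LinearMap.toContinuousLinearMap (bas.coord i)) (ζ x) * β x (Fin.cons (bas i) w)
    from funext hrepr]
  exact ContDiff.sum fun i _ =>
    (((LinearMap.toContinuousLinearMap (bas.coord i)).contDiff).comp hζ).mul
      (hβsm (Fin.cons (bas i) w))

lemma extDeriv_mul (m : ℕ) (f : E → ℝ) (hf : ContDiff ℝ (⊤ : ℕ∞) f)
    (ρ : E → (Fin m → E) → ℝ) (hρ : SmoothForm m ρ) (x : E) (v : Fin (m+1) → E) :
    extDerivF m (fun y w => f y * ρ y w) x v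
      = (∑ i : Fin (m+1), (-1:ℝ)^(i:ℕ) * (fderiv ℝ f x (v i) * ρ x (i.removeNth v)))
        + f x * extDerivF m ρ x v := by
  unfold extDerivF
  rw [Finset.mul_sum, ← Finset.sum_add_distrib]
  refine Finset.sum_congr rfl fun i _ => ?_
  have hd : fderiv ℝ (fun y => f y * ρ y (i.removeNth v)) x
      = f x • fderiv ℝ (fun y => ρ y (i.removeNth v)) x
        + ρ x (i.removeNth v) • fderiv ℝ f x :=
    fderiv_mul ((hf.differentiable (by simp)) x) (((hρ (i.removeNth v)).differentiable (by simp)) x)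
  rw [hd]
  simp only [ContinuousLinearMap.add_apply, ContinuousLinearMap.smul_apply, smul_eq_mul]
  ring

/-- for a compact oriented Lagrangian submanifold `Λ` of a symplectic `2n`-manifold
(here `n = m+1`), an `n`-form `β` with `ω ∧ β = 0`, and Hamiltonian functions `H, K` with
Hamiltonian vector fields `ξ, ζ`, one has `∫_Λ {H,K} β = ∫_Λ (H d(i_ζ β) − K d(i_ξ β))`.
Integration over `Λ` is encoded by a functional `I` on `n`-forms which is linear, depends only on
the restriction of a form to `Λ`, and satisfies Stokes' theorem (`Λ` compact without boundary). -/
theorem calabi_poisson_integral_identity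
    {E : Type*} [NormedAddCommGroup E] [NormedSpace ℝ E] (m : ℕ)
    (hdim : Module.finrank ℝ E = 2 * (m + 1))
    (ω : E → (Fin 2 → E) → ℝ)
    (hωalt : IsAltForm 2 ω) (hωsm : SmoothForm 2 ω)
    (hωclosed : ∀ x v, extDerivF 2 ω x v = 0)
    (hωnd : ∀ x u, (∀ w, ω x ![u, w] = 0) → u = 0)
    (β : E → (Fin (m+1) → E) → ℝ) (hβalt : IsAltForm (m+1) β) (hβsm : SmoothForm (m+1) β)
    (hωβ : ∀ x v, wedgeF ω β x v = 0)
    (Λ : Set E) (hΛcpt : IsCompact Λ) (T : E → Submodule ℝ E)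
    (hT : ∀ x ∈ Λ, Module.finrank ℝ (T x) = m + 1)
    (hLag : ∀ x ∈ Λ, ∀ u ∈ T x, ∀ w ∈ T x, ω x ![u, w] = 0)
    (I : (E → (Fin (m+1) → E) → ℝ) → ℝ)
    (hIadd : ∀ α α', I (fun x v => α x v + α' x v) = I α + I α')
    (hIsmul : ∀ (c : ℝ) α, I (fun x v => c * α x v) = c * I α)
    (hIres : ∀ α, (∀ x ∈ Λ, ∀ v : Fin (m+1) → E, (∀ i, v i ∈ T x) → α x v = 0) → I α = 0)
    (hIstokes : ∀ ρ : E → (Fin m → E) → ℝ, IsAltForm m ρ → SmoothForm m ρ →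
      I (extDerivF m ρ) = 0)
    (H K : E → ℝ) (hH : ContDiff ℝ (⊤ : ℕ∞) H) (hK : ContDiff ℝ (⊤ : ℕ∞) K)
    (ξ ζ : E → E)
    (hξ : ∀ x w, ω x ![ξ x, w] = fderiv ℝ H x w)
    (hζ : ∀ x w, ω x ![ζ x, w] = fderiv ℝ K x w) :
    I (fun x v => ω x ![ζ x, ξ x] * β x v) =
      I (fun x v => H x * extDerivF m (iprod ζ β) x v - K x * extDerivF m (iprod ξ β) x v) := by

  have hfd : FiniteDimensional ℝ E := FiniteDimensional.of_finrank_pos (by omega)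
  have hξsm : ContDiff ℝ (⊤ : ℕ∞) ξ := smooth_hamiltonian_vf m hdim ω hωalt hωsm hωnd H hH ξ hξ
  have hζsm : ContDiff ℝ (⊤ : ℕ∞) ζ := smooth_hamiltonian_vf m hdim ω hωalt hωsm hωnd K hK ζ hζ
  have hiζalt := isalt_iprod m ζ β hβalt
  have hiξalt := isalt_iprod m ξ β hβalt
  have hiζsm := smooth_iprod m ζ hζsm β hβalt hβsm
  have hiξsm := smooth_iprod m ξ hξsm β hβalt hβsm
  set Dζ : E → (Fin (m+1) → E) → ℝ := fun x v => ∑ i : Fin (m+1),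
    (-1:ℝ)^(i:ℕ) * (fderiv ℝ H x (v i) * iprod ζ β x (i.removeNth v)) with hDζdef
  set Dξ : E → (Fin (m+1) → E) → ℝ := fun x v => ∑ i : Fin (m+1),
    (-1:ℝ)^(i:ℕ) * (fderiv ℝ K x (v i) * iprod ξ β x (i.removeNth v)) with hDξdef
  set Gζ : E → (Fin (m+1) → E) → ℝ := fun x v => H x * extDerivF m (iprod ζ β) x v with hGζdef
  set Gξ : E → (Fin (m+1) → E) → ℝ := fun x v => K x * extDerivF m (iprod ξ β) x v with hGξdef
  have hIsub : ∀ α α' : E → (Fin (m+1) → E) → ℝ,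
      I (fun x v => α x v - α' x v) = I α - I α' := by
    intro α α'
    have h1 : (fun (x : E) (v : Fin (m+1) → E) => α x v - α' x v)
        = (fun x v => α x v + (fun x v => (-1:ℝ) * α' x v) x v) := by
      funext x v; ring
    rw [h1, hIadd, hIsmul]; ring
  have stokesζ : I Dζ + I Gζ = 0 := by
    rw [← hIadd]
    have h2 : (fun x v => Dζ x v + Gζ x v)
        = extDerivF m (fun x w => H x * iprod ζ β x w) := by
      funext x v
      rw [hDζdef, hGζdef]
      exact (extDeriv_mul m H hH (iprod ζ β) hiζsm x v).symm
    rw [h2]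
    exact hIstokes _ (isalt_smul m H _ hiζalt) (smooth_smul_form m H hH _ hiζsm)
  have stokesξ : I Dξ + I Gξ = 0 := by
    rw [← hIadd]
    have h2 : (fun x v => Dξ x v + Gξ x v)
        = extDerivF m (fun x w => K x * iprod ξ β x w) := by
      funext x v
      rw [hDξdef, hGξdef]
      exact (extDeriv_mul m K hK (iprod ξ β) hiξsm x v).symm
    rw [h2]
    exact hIstokes _ (isalt_smul m K _ hiξalt) (smooth_smul_form m K hK _ hiξsm)
  have hres : I (fun x v => ω x ![ζ x, ξ x] * β x v + (Dζ x v - Dξ x v)) = 0 := by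
    apply hIres
    intro x hx v hv
    obtain ⟨A, hA⟩ := hωalt x
    obtain ⟨B, hB⟩ := hβalt x
    have hA0 : ∀ i j : Fin (m+1), A ![v i, v j] = 0 := fun i j => by
      rw [← hA]; exact hLag x hx _ (hv i) _ (hv j)
    have hcast : 2 + (m+1) = m+3 := by omega
    have hw := hωβ x (fun k => (Fin.cons (ζ x) (Fin.cons (ξ x) v) : Fin (m+3) → E)
      (Fin.cast hcast k))
    simp only [wedgeF] at hw
    have hfac : (((Nat.factorial 2) * Nat.factorial (m+1) : ℕ) : ℝ) ≠ 0 := by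
      refine Nat.cast_ne_zero.mpr ?_
      positivity
    have hsum0 := (mul_eq_zero.mp hw).resolve_left (inv_ne_zero hfac)
    have hsum0' : (∑ σ : Equiv.Perm (Fin (2+(m+1))), ((Equiv.Perm.sign σ : ℤ):ℝ) *
        (A fun i => (Fin.cons (ζ x) (Fin.cons (ξ x) v) : Fin (m+3) → E)
          (Fin.cast hcast (σ (Fin.castAdd (m+1) i)))) *
        (B fun j => (Fin.cons (ζ x) (Fin.cons (ξ x) v) : Fin (m+3) → E)
          (Fin.cast hcast (σ (Fin.natAdd 2 j))))) = 0 := by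
      rw [← hsum0]
      exact Finset.sum_congr rfl fun σ _ => by rw [hA, hB]
    have hexp := perm_sum_expand m A B (ζ x) (ξ x) v hA0
    have hcore2 : 2 * ((m+1).factorial : ℝ) * (A ![ζ x, ξ x] * B v
        + ∑ i, A ![ξ x, v i] * B (Function.update v i (ζ x))
        - ∑ i, A ![ζ x, v i] * B (Function.update v i (ξ x))) = 0 := by
      rw [← hexp]
      exact hsum0'
    have hpos : (2 * ((m+1).factorial:ℝ)) ≠ 0 := by positivity
    have hcore : A ![ζ x, ξ x] * B v
        + ∑ i, A ![ξ x, v i] * B (Function.update v i (ζ x))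
        - ∑ i, A ![ζ x, v i] * B (Function.update v i (ξ x)) = 0 :=
      (mul_eq_zero.mp hcore2).resolve_left hpos
    have hsq : ∀ i : Fin (m+1), ((-1:ℝ)^(i:ℕ)) * ((-1:ℝ)^(i:ℕ)) = 1 := by
      intro i; rw [← mul_pow]; norm_num
    have hDζv : Dζ x v = ∑ i, A ![ξ x, v i] * B (Function.update v i (ζ x)) := by
      simp only [hDζdef]
      refine Finset.sum_congr rfl fun i _ => ?_
      rw [show iprod ζ β x (i.removeNth v) = β x (Fin.cons (ζ x) (i.removeNth v)) from rfl,
        ← hξ x (v i), hA, hB, alt_cons_removeNth]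
      linear_combination A ![ξ x, v i] * B (Function.update v i (ζ x)) * hsq i
    have hDξv : Dξ x v = ∑ i, A ![ζ x, v i] * B (Function.update v i (ξ x)) := by
      simp only [hDξdef]
      refine Finset.sum_congr rfl fun i _ => ?_
      rw [show iprod ξ β x (i.removeNth v) = β x (Fin.cons (ξ x) (i.removeNth v)) from rfl,
        ← hζ x (v i), hA, hB, alt_cons_removeNth]
      linear_combination A ![ζ x, v i] * B (Function.update v i (ξ x)) * hsq i
    rw [hA, hB, hDζv, hDξv]
    linarith [hcore]
  have h5 : I (fun x v => ω x ![ζ x, ξ x] * β x v + (Dζ x v - Dξ x v))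
      = I (fun x v => ω x ![ζ x, ξ x] * β x v) + I (fun x v => Dζ x v - Dξ x v) :=
    hIadd (fun x v => ω x ![ζ x, ξ x] * β x v) (fun x v => Dζ x v - Dξ x v)
  rw [hIsub Dζ Dξ, hres] at h5
  have hQ : I (fun x v => H x * extDerivF m (iprod ζ β) x v
      - K x * extDerivF m (iprod ξ β) x v) = I Gζ - I Gξ := hIsub Gζ Gξ
  rw [hQ]
  linarith [h5, stokesζ, stokesξ]
end
end
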